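/- In the gadget graph G_{x,y} constructed from (x,y) ∈ {0,1}^n × {0,1}^n, the 4n+3 oriented edges (each non-root vertex has out-degree exactly 1) form a directed spanning tree rooted at r if and only if ⟨x,y⟩ = Σᵢ xᵢyᵢ is odd. -/

import Mathlib

/-!
A walk entering gadget `i` on layer `j` leaves it on layer `j + xᵢyᵢ (mod 2)`, so the walk from
`a 0 0` leaves the last gadget on layer `⟨x, y⟩ mod 2`. If this is odd it enters `bfin → r`, and
since every vertex runs into `afin → a 0 0` or into `r`, all vertices then reach `r`. If it is
even, the layer corrected by the parity of the gadgets still ahead is invariant under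
`gadgetStep`, and it takes different values at `afin` and at `r`.
-/

open Finset

/-- Vertices of the gadget graph `G_{x,y}` with `n+1` full gadgets: `a i j`, `b i j`
(`i ∈ [n+1]`, `j ∈ {0,1}`, i.e. first/second layer position), the final gadget vertices
`afin = a_{n+2,1}` and `bfin = b_{n+2,1}`, and the root `r`. -/
inductive GadgetV (n : ℕ) where
  | a (i : Fin (n + 1)) (j : Fin 2)
  | b (i : Fin (n + 1)) (j : Fin 2)
  | afin
  | bfin
  | r
deriving DecidableEq

/-- The vertex `a_{i+1, j}` of the next gadget, where the nonexistent position
`a_{n+2,2}` is interpreted as `b_{n+2,1} = bfin`. -/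
def nextA {n : ℕ} (i : Fin (n + 1)) (j : Fin 2) : GadgetV n :=
  if h : (i : ℕ) + 1 < n + 1 then .a ⟨i + 1, h⟩ j
  else if j = 0 then .afin else .bfin

/-- The out-map of the gadget graph `G_{x,y}`: every vertex other than the root has
out-degree exactly one (the root is sent to itself). If `x i = 0` then
`a_{i,1} → a_{i+1,1}`, `a_{i,2} → a_{i+1,2}`; if `x i = 1` then `a_{i,j} → b_{i,j}`;
if `y i = 0` then `b_{i,j} → a_{i+1,j}`; if `y i = 1` then the layers are swapped;
finally `a_{n+2,1} → a_{1,1}` and `b_{n+2,1} → r`. -/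
def gadgetStep {n : ℕ} (x y : Fin (n + 1) → Bool) : GadgetV n → GadgetV n
  | .a i j => if x i then .b i j else nextA i j
  | .b i j => if y i then nextA i (if j = 0 then 1 else 0) else nextA i j
  | .afin => .a 0 0
  | .bfin => .r
  | .r => .r

open Relation

theorem reflTransGen_apply_eq_iff_exists_iterate {α : Type*} {f : α → α} {a b : α} :
    ReflTransGen (fun u v => f u = v) a b ↔ ∃ k, f^[k] a = b := by
  constructor
  · intro h
    induction h with
    | refl => exact ⟨0, rfl⟩
    | tail _ hstep ih =>
      obtain ⟨k, rfl⟩ := ih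
      exact ⟨k + 1, by rw [Function.iterate_succ_apply', hstep]⟩
  · rintro ⟨k, rfl⟩
    induction k with
    | zero => exact .refl
    | succ k ih => exact ih.tail (Function.iterate_succ_apply' f k a).symm

theorem Fin.two_ite_eq_add_one (j : Fin 2) : (if j = 0 then 1 else 0) = j + 1 := by
  revert j; decide

namespace Gadget

open Fin.CommRing

variable {n : ℕ} (x y : Fin (n + 1) → Bool)

abbrev Reaches : GadgetV n → GadgetV n → Prop :=
  ReflTransGen fun u v => gadgetStep x y u = v

def innerTerm (i : Fin (n + 1)) : Fin 2 := if x i = true ∧ y i = true then 1 else 0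

def suffixParity (t : ℕ) : Fin 2 :=
  ∑ k ∈ univ.filter (fun k : Fin (n + 1) => t ≤ k.val), innerTerm x y k

theorem suffixParity_eq_innerTerm_add (i : Fin (n + 1)) :
    suffixParity x y i = innerTerm x y i + suffixParity x y (i + 1) := by
  have : univ.filter (fun k : Fin (n + 1) => (i : ℕ) ≤ k) =
      insert i (univ.filter fun k : Fin (n + 1) => (i : ℕ) + 1 ≤ k) := by
    ext k; simp [Fin.ext_iff]; omega
  rw [suffixParity, this, sum_insert (by simp)]
  rfl

theorem suffixParity_of_lt {t : ℕ} (ht : n < t) : suffixParity x y t = 0 := by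
  rw [suffixParity, filter_false_of_mem (fun k _ => by omega), sum_empty]

theorem suffixParity_zero_eq_cast_card :
    suffixParity x y 0 = (#{i | x i = true ∧ y i = true} : Fin 2) := by
  rw [suffixParity, filter_true_of_mem (fun k _ => Nat.zero_le _)]
  simp only [innerTerm]
  rw [sum_boole]

theorem suffixParity_zero_eq_one_iff_odd :
    suffixParity x y 0 = 1 ↔ Odd #{i | x i = true ∧ y i = true} := by
  rw [suffixParity_zero_eq_cast_card]
  exact ZMod.natCast_eq_one_iff_odd

theorem suffixParity_zero_eq_zero_iff_even :
    suffixParity x y 0 = 0 ↔ Even #{i | x i = true ∧ y i = true} := by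
  rw [suffixParity_zero_eq_cast_card]
  exact ZMod.natCast_eq_zero_iff_even

theorem nextA_castSucc (i : Fin n) (j : Fin 2) :
    nextA i.castSucc j = .a i.succ j := by
  simp [nextA, Fin.succ]

theorem nextA_last (j : Fin 2) :
    nextA (Fin.last n) j = if j = 0 then .afin else .bfin := by
  simp [nextA]

theorem gadgetStep_b (i : Fin (n + 1)) (j : Fin 2) :
    gadgetStep x y (.b i j) = nextA i (j + if y i = true then 1 else 0) := by
  cases h : y i <;> simp [gadgetStep, h, Fin.two_ite_eq_add_one]

theorem a_reaches_nextA (i : Fin (n + 1)) (j : Fin 2) :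
    Reaches x y (.a i j) (nextA i (j + innerTerm x y i)) := by
  cases hx : x i
  · exact .single (by simp [gadgetStep, innerTerm, hx])
  · refine .head (show gadgetStep x y (.a i j) = .b i j by simp [gadgetStep, hx]) (.single ?_)
    cases hy : y i <;> simp [gadgetStep_b, innerTerm, hx, hy]

theorem a_reaches_nextA_last (i : Fin (n + 1)) (j : Fin 2) :
    Reaches x y (.a i j) (nextA (Fin.last n) (j + suffixParity x y i)) := by
  induction i using Fin.reverseInduction generalizing j with
  | last =>
    rw [suffixParity_eq_innerTerm_add, suffixParity_of_lt x y (by simp), add_zero]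
    exact a_reaches_nextA x y _ j
  | cast i ih =>
    rw [suffixParity_eq_innerTerm_add, ← add_assoc]
    exact (a_reaches_nextA x y _ j).trans (nextA_castSucc i _ ▸ ih _)

theorem bfin_reaches_r : Reaches x y (.bfin : GadgetV n) .r := .single rfl

theorem a_reaches_afin_or_r (i : Fin (n + 1)) (j : Fin 2) :
    Reaches x y (.a i j) .afin ∨ Reaches x y (.a i j) .r := by
  have h := a_reaches_nextA_last x y i j
  rw [nextA_last] at h
  split_ifs at h
  · exact .inl h
  · exact .inr (h.trans (bfin_reaches_r x y))

theorem nextA_reaches_afin_or_r (i : Fin (n + 1)) (j : Fin 2) :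
    Reaches x y (nextA i j) .afin ∨ Reaches x y (nextA i j) .r := by
  unfold nextA
  split_ifs
  · exact a_reaches_afin_or_r x y _ j
  · exact .inl .refl
  · exact .inr (bfin_reaches_r x y)

theorem reaches_afin_or_r (v : GadgetV n) : Reaches x y v .afin ∨ Reaches x y v .r := by
  cases v with
  | a i j => exact a_reaches_afin_or_r x y i j
  | b i j =>
    exact (nextA_reaches_afin_or_r x y i _).imp (.head (gadgetStep_b x y i j))
      (.head (gadgetStep_b x y i j))
  | afin => exact .inl .refl
  | bfin => exact .inr (bfin_reaches_r x y)
  | r => exact .inr .refl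

theorem afin_reaches_r (h : suffixParity x y 0 = 1) : Reaches x y .afin .r := by
  have hexit := a_reaches_nextA_last x y 0 0
  rw [Fin.val_zero, h, zero_add, nextA_last, if_neg one_ne_zero] at hexit
  exact .head rfl (hexit.trans (bfin_reaches_r x y))

theorem reaches_r_of_suffixParity_eq_one (h : suffixParity x y 0 = 1) (v : GadgetV n) :
    Reaches x y v .r :=
  (reaches_afin_or_r x y v).elim (fun hv => hv.trans (afin_reaches_r x y h)) id

def potential : GadgetV n → Fin 2
  | .a i j => j + suffixParity x y i
  | .b i j => j + (if y i = true then 1 else 0) + suffixParity x y (i + 1)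
  | .afin => 0
  | .bfin => 1
  | .r => 1

theorem potential_nextA (i : Fin (n + 1)) (j : Fin 2) :
    potential x y (nextA i j) = j + suffixParity x y (i + 1) := by
  unfold nextA
  split_ifs with hi hj
  · rfl
  · simp [potential, suffixParity_of_lt x y (t := i + 1) (by omega), hj]
  · simp [potential, suffixParity_of_lt x y (t := i + 1) (by omega), Fin.eq_one_of_ne_zero j hj]

theorem potential_gadgetStep (h : suffixParity x y 0 = 0) (v : GadgetV n) :
    potential x y (gadgetStep x y v) = potential x y v := by
  cases v with
  | a i j =>
    cases hx : x i
    · simp only [gadgetStep, hx, Bool.false_eq_true, if_false, potential_nextA]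
      simp [potential, suffixParity_eq_innerTerm_add x y i, innerTerm, hx]
    · simp [gadgetStep, potential, suffixParity_eq_innerTerm_add x y i, innerTerm, hx, add_assoc]
  | b i j =>
    rw [gadgetStep_b, potential_nextA]
    simp [potential, add_assoc]
  | afin => simp [gadgetStep, potential, h]
  | bfin => rfl
  | r => rfl

theorem not_afin_reaches_r (h : suffixParity x y 0 = 0) : ¬ Reaches x y .afin .r := by
  intro hreach
  obtain ⟨k, hk⟩ := reflTransGen_apply_eq_iff_exists_iterate.mp hreach
  have := congrFun (Function.iterate_invariant (f := gadgetStep x y) (g := potential x y)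
    (funext (potential_gadgetStep x y h)) k) .afin
  simp [hk, potential] at this

end Gadget

/-- **Correctness of the gadget reduction.** The oriented edges of `G_{x,y}` form a
directed spanning tree rooted at `r` (i.e. every vertex reaches `r` by iterating the
out-map) if and only if `⟨x,y⟩ = Σᵢ xᵢyᵢ` is odd. -/
theorem gadget_spanning_tree_iff_inner_product_odd (n : ℕ)
    (x y : Fin (n + 1) → Bool) :
    (∀ v : GadgetV n, ∃ k : ℕ, (gadgetStep x y)^[k] v = .r) ↔
      Odd ((Finset.univ.filter fun i => x i = true ∧ y i = true)).card := by
  simp only [← reflTransGen_apply_eq_iff_exists_iterate]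
  constructor
  · intro hreach
    by_contra hodd
    rw [Nat.not_odd_iff_even, ← Gadget.suffixParity_zero_eq_zero_iff_even] at hodd
    exact Gadget.not_afin_reaches_r x y hodd (hreach .afin)
  · intro hodd
    exact Gadget.reaches_r_of_suffixParity_eq_one x y
      ((Gadget.suffixParity_zero_eq_one_iff_odd x y).mpr hodd)
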